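/- Define the 2×2 matrix weight W(x) = [[1+x², 1−x],[1−x, (1−x)²]] on (0,1) and the eigenvalue matrices Λₙ = [[2n²+6n+3/2, −n−5/2],[n+1/2, −3/2]]. Then for every N ∈ ℕ there is no 2×2 real matrix M such that (M − x(Λ_{N+1} + Λ_N)) W(x) − W(x) (M − x(Λ_{N+1} + Λ_N))ᵀ = 0 for all x ∈ (0,1). -/
import Mathlib


open Matrix

/-- The matrix weight of Example 4.4. -/
noncomputable def exW (x : ℝ) : Matrix (Fin 2) (Fin 2) ℝ :=
  !![1 + x ^ 2, 1 - x; 1 - x, (1 - x) ^ 2]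

/-- Eigenvalue of the operator `D₊` on the monic orthogonal polynomial `Rₙ`. -/
noncomputable def exΛplus (n : ℕ) : Matrix (Fin 2) (Fin 2) ℝ :=
  !![2 * (n : ℝ) ^ 2 + 6 * (n : ℝ) + 3 / 2, -(n : ℝ) - 5 / 2; (n : ℝ) + 1 / 2, -(3 / 2)]

set_option maxHeartbeats 1000000 in
/-- Example 4.4: hypothesis (3.1) fails for the operator `D₊`: there is no constant
matrix `M` making `(M - x(Λ_{N+1} + Λ_N)) W(x)` symmetric for all `x ∈ (0,1)`. -/
theorem stmt10 (N : ℕ) :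
    ¬ ∃ M : Matrix (Fin 2) (Fin 2) ℝ, ∀ x ∈ Set.Ioo (0 : ℝ) 1,
      (M - x • (exΛplus (N + 1) + exΛplus N)) * exW x
        - exW x * (M - x • (exΛplus (N + 1) + exΛplus N))ᵀ = 0 := by
  rintro ⟨M, h⟩
  have hN : (0 : ℝ) ≤ (N : ℝ) := Nat.cast_nonneg N
  have h1 := h (1/5) (by norm_num)
  have h2 := h (2/5) (by norm_num)
  have h3 := h (3/5) (by norm_num)
  have h4 := h (4/5) (by norm_num)
  have e1 := congrFun (congrFun h1 0) 1
  have e2 := congrFun (congrFun h2 0) 1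
  have e3 := congrFun (congrFun h3 0) 1
  have e4 := congrFun (congrFun h4 0) 1
  simp only [exW, exΛplus, Matrix.sub_apply, Matrix.mul_apply, Fin.sum_univ_two,
    Matrix.smul_apply, Matrix.add_apply, Matrix.transpose_apply, Matrix.of_apply,
    Matrix.cons_val', Matrix.cons_val_zero, Matrix.cons_val_one, Matrix.head_cons,
    Matrix.head_fin_const, Matrix.empty_val', Matrix.cons_val_fin_one, Matrix.zero_apply,
    smul_eq_mul, Nat.cast_add, Nat.cast_one] at e1 e2 e3 e4
  linarith [e1, e2, e3, e4, hN]
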